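/- Let d ≥ 2 and let a, b : ℝ^d_{++} → ℝ be convex and positively homogeneous of degree 1. Let P̄ ⊆ ℝ^d_{++} be nonempty, convex, and compact, and define A = {y ∈ ℝ^d : p·y ≤ a(p) for all p ∈ P̄} and B = {y ∈ ℝ^d : p·y ≤ b(p) for all p ∈ P̄}. Then the Hausdorff distance between A and B satisfies d_H(A, B) = sup_{p∈P̄} |a(p/‖p‖) − b(p/‖p‖)|. -/

import Mathlib

/-!
A convex, positively homogeneous function on an open cone is touched at every point `x` by a
linear minorant `⟪·, y⟫`: Hahn–Banach applied to the strict epigraph gives a subgradient at `x`,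
and homogeneity along the ray through `x` makes it tight there. Write `A`, `B` for the sets cut
out by `a`, `b`, and `u = p / ‖p‖` for `p ∈ P`.

Lower bound: the vector touching `a` at `u` lies in `A`, while `⟪u, ·⟫ ≤ b u` on `B`, so it is at
distance at least `a u - b u` from `B`.

Upper bound: for `y ∈ A` let `z` be its nearest point in `B`. Then `y - z` is an outer normal of
`B` at `z`; by Farkas' lemma such normals lie in the cone spanned by `P` (closed, as `P` is
compact and avoids `0`), so `y - z = ‖y - z‖ • u` for some `p ∈ P`. The vector touching `b` at `u`
lies in `B`, and `z` maximises `⟪u, ·⟫` on `B`, so `b u ≤ ⟪u, z⟫`; with `⟪u, y⟫ ≤ a u` this gives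
`‖y - z‖ = ⟪u, y - z⟫ ≤ a u - b u`.
-/

open scoped RealInnerProductSpace

/-- The strictly positive orthant of `ℝ^d`. -/
def posOrthant (d : ℕ) : Set (EuclideanSpace ℝ (Fin d)) := {p | ∀ i, 0 < p i}

open Set Metric
open scoped Pointwise

section Subgradient

variable {E : Type*} [NormedAddCommGroup E] [NormedSpace ℝ E] [FiniteDimensional ℝ E]
  {C : Set E} {f : E → ℝ} {x : E}

theorem ConvexOn.isOpen_strictEpigraph (hC : IsOpen C) (hf : ConvexOn ℝ C f) :
    IsOpen {q : E × ℝ | q.1 ∈ C ∧ f q.1 < q.2} :=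
  (((hf.continuousOn hC).comp continuousOn_fst fun _ h => h).prodMk
    continuousOn_snd).isOpen_inter_preimage (hC.preimage continuous_fst)
      (isOpen_lt continuous_fst continuous_snd)

theorem ConvexOn.exists_subgradient (hC : IsOpen C) (hf : ConvexOn ℝ C f) (hx : x ∈ C) :
    ∃ g : StrongDual ℝ E, ∀ y ∈ C, f x + g (y - x) ≤ f y := by
  have hconv : Convex ℝ {q : E × ℝ | q.1 ∈ C ∧ f q.1 < q.2} :=
    convex_iff_openSegment_subset.2 fun p hp q hq =>
      hf.openSegment_subset_strict_epigraph p q hp ⟨hq.1, hq.2.le⟩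
  obtain ⟨φ, hφ⟩ := geometric_hahn_banach_open_point hconv (hf.isOpen_strictEpigraph hC)
    (x := (x, f x)) fun h => h.2.false
  set c := φ (0, 1)
  have hsplit : ∀ q t, φ (q, t) = φ (q, 0) + t * c := fun q t => by
    rw [← smul_eq_mul, ← map_smul, ← map_add, Prod.smul_mk, Prod.mk_add_mk]; simp
  have hc : c < 0 := by
    have := hφ (x, f x + 1) ⟨hx, lt_add_one _⟩
    rw [hsplit, hsplit x (f x)] at this
    linarith
  refine ⟨(-c)⁻¹ • φ.comp (.inl ℝ E ℝ), fun y hy =>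
    le_of_forall_gt_imp_ge_of_dense fun t ht => ?_⟩
  have hφy := hφ (y, t) ⟨hy, ht⟩
  rw [hsplit, hsplit x (f x)] at hφy
  have hsub : φ (y - x, 0) = φ (y, 0) - φ (x, 0) := by
    rw [← map_sub, Prod.mk_sub_mk, sub_zero]
  simp only [FunLike.coe_smul, ContinuousLinearMap.coe_comp, Function.comp_apply,
    ContinuousLinearMap.inl_apply, Pi.smul_apply, smul_eq_mul, hsub]
  rw [← le_sub_iff_add_le', inv_mul_le_iff₀ (neg_pos.2 hc)]
  linarith

end Subgradient

section Support

variable {E : Type*} [NormedAddCommGroup E] [InnerProductSpace ℝ E] [FiniteDimensional ℝ E]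
  {C : Set E} {f : E → ℝ} {x : E}

theorem ConvexOn.exists_inner_le_of_posHomogeneous (hC : IsOpen C)
    (hCsmul : ∀ p ∈ C, ∀ l : ℝ, 0 < l → l • p ∈ C) (hf : ConvexOn ℝ C f)
    (hhom : ∀ p ∈ C, ∀ l : ℝ, 0 < l → f (l • p) = l * f p) (hx : x ∈ C) :
    ∃ y : E, (∀ q ∈ C, ⟪q, y⟫ ≤ f q) ∧ ⟪x, y⟫ = f x := by
  obtain ⟨g, hg⟩ := hf.exists_subgradient hC hx
  set y := (InnerProductSpace.toDual ℝ E).symm g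
  have hy : ∀ q, ⟪q, y⟫ = g q := fun q => by
    rw [real_inner_comm, InnerProductSpace.toDual_symm_apply]
  have hray : ∀ l : ℝ, 0 < l → (l - 1) * g x ≤ (l - 1) * f x := fun l hl => by
    have := hg _ (hCsmul x hx l hl)
    rw [hhom x hx l hl, map_sub, map_smul, smul_eq_mul] at this
    linarith
  have hxy : ⟪x, y⟫ = f x := by
    rw [hy]
    have h2 := hray 2 two_pos
    have h1 := hray (1 / 2) (by norm_num)
    linarith
  refine ⟨y, fun q hq => ?_, hxy⟩
  have := hg q hq
  rw [map_sub, ← hy, ← hy, hxy] at this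
  linarith

end Support

section Cone

variable {E : Type*} [NormedAddCommGroup E]

theorem isClosed_Ici_smul [NormedSpace ℝ E] {P : Set E} (hP : IsCompact P)
    (hP0 : (0 : E) ∉ P) :
    IsClosed (Ici (0 : ℝ) • P) := by
  obtain ⟨ε, hε, hball⟩ := Metric.isOpen_iff.1 hP.isClosed.isOpen_compl 0 hP0
  have hnorm : ∀ p ∈ P, ε ≤ ‖p‖ := fun p hp => by
    by_contra h
    exact hball (mem_ball_zero_iff.2 (not_le.1 h)) hp
  refine isClosed_of_closure_subset fun x hx => ?_
  set R := ‖x‖ + 1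
  -- near `x` the cone coincides with the compact set `[0, R/ε] • P`
  have hK : IsCompact (Icc 0 (R / ε) • P) := isCompact_Icc.smul_set hP
  have hsub : ball 0 R ∩ Ici (0 : ℝ) • P ⊆ Icc 0 (R / ε) • P := by
    rintro _ ⟨hR, l, hl, p, hp, rfl⟩
    refine ⟨l, ⟨hl, ?_⟩, p, hp, rfl⟩
    rw [mem_ball_zero_iff, norm_smul, Real.norm_of_nonneg hl] at hR
    rw [le_div_iff₀ hε]
    nlinarith [mul_le_mul_of_nonneg_left (hnorm p hp) (mem_Ici.1 hl)]
  have hxK : x ∈ Icc 0 (R / ε) • P :=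
    closure_minimal hsub hK.isClosed (isOpen_ball.inter_closure
      ⟨mem_ball_zero_iff.2 (lt_add_one _), hx⟩)
  exact smul_subset_smul_right Icc_subset_Ici_self hxK

variable [InnerProductSpace ℝ E] [CompleteSpace E]

theorem mem_Ici_smul_of_forall_inner_nonpos {P : Set E} (hPne : P.Nonempty)
    (hPconv : Convex ℝ P) (hPcomp : IsCompact P) (hP0 : (0 : E) ∉ P) {w : E}
    (hw : ∀ v, (∀ p ∈ P, ⟪p, v⟫ ≤ 0) → ⟪w, v⟫ ≤ 0) : w ∈ Ici (0 : ℝ) • P := by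
  let K : ProperCone ℝ E :=
    { carrier := Ici (0 : ℝ) • P
      add_mem' := by
        rintro _ _ ⟨l₁, hl₁, p₁, hp₁, rfl⟩ ⟨l₂, hl₂, p₂, hp₂, rfl⟩
        obtain ⟨p, hp, hsum⟩ := hPconv.exists_mem_add_smul_eq hp₁ hp₂ hl₁ hl₂
        exact ⟨l₁ + l₂, mem_Ici.2 (add_nonneg hl₁ hl₂), p, hp, hsum⟩
      zero_mem' := ⟨0, mem_Ici.2 le_rfl, hPne.some, hPne.some_mem, zero_smul _ _⟩
      smul_mem' := by
        rintro c _ ⟨l, hl, p, hp, rfl⟩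
        exact ⟨c * l, mem_Ici.2 (mul_nonneg c.2 hl), p, hp, by rw [← smul_assoc]; rfl⟩
      isClosed' := isClosed_Ici_smul hPcomp hP0 }
  by_contra hwK
  obtain ⟨v, hvK, hwv⟩ := K.hyperplane_separation' hwK
  have := hw (-v) fun p hp => by
    rw [inner_neg_right, neg_nonpos]
    exact hvK p ⟨1, mem_Ici.2 zero_le_one, p, hp, one_smul _ _⟩
  rw [inner_neg_right, neg_nonpos] at this
  exact this.not_gt hwv

end Cone

section Halfspaces

variable {E : Type*} [NormedAddCommGroup E] [InnerProductSpace ℝ E]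

def halfspaceInter (P : Set E) (f : E → ℝ) : Set E := {y | ∀ p ∈ P, ⟪p, y⟫ ≤ f p}

variable {C P : Set E} {a b f : E → ℝ}

theorem halfspaceInter_eq_biInter (P : Set E) (f : E → ℝ) :
    halfspaceInter P f = ⋂ p ∈ P, {y | ⟪p, y⟫ ≤ f p} := by
  ext; simp [halfspaceInter]

theorem convex_halfspaceInter : Convex ℝ (halfspaceInter P f) := by
  rw [halfspaceInter_eq_biInter]
  exact convex_iInter₂ fun p _ => convex_halfSpace_le (innerₛₗ ℝ p).isLinear _

theorem isClosed_halfspaceInter : IsClosed (halfspaceInter P f) := by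
  rw [halfspaceInter_eq_biInter]
  exact isClosed_biInter fun p _ =>
    isClosed_le (continuous_const.inner continuous_id) continuous_const

theorem inner_smul_le_of_mem_halfspaceInter
    (hhom : ∀ p ∈ C, ∀ l : ℝ, 0 < l → f (l • p) = l * f p) (hPC : P ⊆ C) {z p : E}
    (hz : z ∈ halfspaceInter P f) (hp : p ∈ P) {l : ℝ} (hl : 0 < l) :
    ⟪l • p, z⟫ ≤ f (l • p) := by
  rw [real_inner_smul_left, hhom p (hPC hp) l hl]
  exact mul_le_mul_of_nonneg_left (hz p hp) hl.le

theorem mem_Ici_smul_of_forall_inner_sub_nonpos [CompleteSpace E] (hPne : P.Nonempty)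
    (hPconv : Convex ℝ P) (hPcomp : IsCompact P) (hP0 : (0 : E) ∉ P) {z w : E}
    (hz : z ∈ halfspaceInter P f) (hw : ∀ y ∈ halfspaceInter P f, ⟪w, y - z⟫ ≤ 0) :
    w ∈ Ici (0 : ℝ) • P :=
  mem_Ici_smul_of_forall_inner_nonpos hPne hPconv hPcomp hP0 fun v hv => by
    simpa using hw (z + v) fun p hp => by
      rw [inner_add_right]
      linarith [hz p hp, hv p hp]

end Halfspaces

section Distance

variable {E : Type*} [NormedAddCommGroup E] [InnerProductSpace ℝ E] [FiniteDimensional ℝ E]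
  {C P : Set E} {a b : E → ℝ}

theorem halfspaceInter_nonempty (hC : IsOpen C)
    (hCsmul : ∀ p ∈ C, ∀ l : ℝ, 0 < l → l • p ∈ C) (hb : ConvexOn ℝ C b)
    (hbhom : ∀ p ∈ C, ∀ l : ℝ, 0 < l → b (l • p) = l * b p) (hPne : P.Nonempty) (hPC : P ⊆ C) :
    (halfspaceInter P b).Nonempty := by
  obtain ⟨p, hp⟩ := hPne
  obtain ⟨y, hyC, -⟩ := hb.exists_inner_le_of_posHomogeneous hC hCsmul hbhom (hPC hp)
  exact ⟨y, fun q hq => hyC q (hPC hq)⟩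

theorem exists_mem_halfspaceInter_sub_le_dist (hC : IsOpen C)
    (hCsmul : ∀ p ∈ C, ∀ l : ℝ, 0 < l → l • p ∈ C) (ha : ConvexOn ℝ C a)
    (hahom : ∀ p ∈ C, ∀ l : ℝ, 0 < l → a (l • p) = l * a p)
    (hbhom : ∀ p ∈ C, ∀ l : ℝ, 0 < l → b (l • p) = l * b p)
    (hPC : P ⊆ C) (hP0 : (0 : E) ∉ P) {p : E} (hp : p ∈ P) :
    ∃ y ∈ halfspaceInter P a, ∀ z ∈ halfspaceInter P b,
      a (‖p‖⁻¹ • p) - b (‖p‖⁻¹ • p) ≤ dist y z := by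
  have hp0 : p ≠ 0 := ne_of_mem_of_not_mem hp hP0
  have hl : 0 < ‖p‖⁻¹ := inv_pos.2 (norm_pos_iff.2 hp0)
  obtain ⟨y, hyC, hy⟩ :=
    ha.exists_inner_le_of_posHomogeneous hC hCsmul hahom (hCsmul p (hPC hp) _ hl)
  refine ⟨y, fun q hq => hyC q (hPC hq), fun z hz => ?_⟩
  calc a (‖p‖⁻¹ • p) - b (‖p‖⁻¹ • p) ≤ ⟪‖p‖⁻¹ • p, y - z⟫ := by
        rw [inner_sub_right, hy]
        linarith [inner_smul_le_of_mem_halfspaceInter hbhom hPC hz hp hl]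
    _ ≤ ‖‖p‖⁻¹ • p‖ * ‖y - z‖ := real_inner_le_norm _ _
    _ = dist y z := by
      rw [show ‖‖p‖⁻¹ • p‖ = 1 from norm_smul_inv_norm hp0, one_mul, dist_eq_norm]

theorem exists_dist_le_of_mem_halfspaceInter (hC : IsOpen C)
    (hCsmul : ∀ p ∈ C, ∀ l : ℝ, 0 < l → l • p ∈ C) (hb : ConvexOn ℝ C b)
    (hahom : ∀ p ∈ C, ∀ l : ℝ, 0 < l → a (l • p) = l * a p)
    (hbhom : ∀ p ∈ C, ∀ l : ℝ, 0 < l → b (l • p) = l * b p)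
    (hPne : P.Nonempty) (hPconv : Convex ℝ P) (hPcomp : IsCompact P) (hPC : P ⊆ C)
    (hP0 : (0 : E) ∉ P) {M : ℝ} (hM0 : 0 ≤ M)
    (hM : ∀ p ∈ P, a (‖p‖⁻¹ • p) - b (‖p‖⁻¹ • p) ≤ M) {y : E}
    (hy : y ∈ halfspaceInter P a) :
    ∃ z ∈ halfspaceInter P b, dist y z ≤ M := by
  obtain ⟨z, hzB, hz⟩ := exists_norm_eq_iInf_of_complete_convex
    (halfspaceInter_nonempty hC hCsmul hb hbhom hPne hPC)
    isClosed_halfspaceInter.isComplete convex_halfspaceInter y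
  have hproj := (norm_eq_iInf_iff_real_inner_le_zero convex_halfspaceInter hzB).1 hz
  obtain ⟨l, hl, p, hp, hlp⟩ :=
    mem_Ici_smul_of_forall_inner_sub_nonpos hPne hPconv hPcomp hP0 hzB hproj
  have hp0 : p ≠ 0 := ne_of_mem_of_not_mem hp hP0
  have hpinv : 0 < ‖p‖⁻¹ := inv_pos.2 (norm_pos_iff.2 hp0)
  set u := ‖p‖⁻¹ • p
  set c := l * ‖p‖
  have hc : 0 ≤ c := mul_nonneg hl (norm_nonneg p)
  have hyz : y - z = c • u := by
    rw [← hlp, smul_smul, mul_assoc, mul_inv_cancel₀ (norm_ne_zero_iff.2 hp0), mul_one]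
  have hnorm : ‖y - z‖ = c := by
    rw [hyz, norm_smul, show ‖u‖ = 1 from norm_smul_inv_norm hp0, Real.norm_of_nonneg hc,
      mul_one]
  obtain ⟨yb, hybC, hyb⟩ :=
    hb.exists_inner_le_of_posHomogeneous hC hCsmul hbhom (hCsmul p (hPC hp) _ hpinv)
  have hya : ⟪u, y⟫ ≤ a u := inner_smul_le_of_mem_halfspaceInter hahom hPC hy hp hpinv
  have hzb : c * ⟪u, yb - z⟫ ≤ 0 := by
    rw [← real_inner_smul_left, ← hyz]
    exact hproj yb fun q hq => hybC q (hPC hq)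
  have hcc : c * c = c * ⟪u, y - z⟫ := by
    rw [← real_inner_smul_left, ← hyz, real_inner_self_eq_norm_sq, hnorm, sq]
  rw [inner_sub_right, hyb] at hzb
  have hcM : c * c ≤ c * M := calc
    c * c = c * (⟪u, y⟫ - ⟪u, z⟫) := by rw [hcc, inner_sub_right]
    _ ≤ c * (a u - b u) := by linarith [mul_le_mul_of_nonneg_left hya hc]
    _ ≤ c * M := mul_le_mul_of_nonneg_left (hM p hp) hc
  refine ⟨z, hzB, ?_⟩
  rw [dist_eq_norm, hnorm]
  nlinarith

end Distance

namespace Metric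

variable {α : Type*} [PseudoMetricSpace α] {s t : Set α} {r : ℝ}

theorem hausdorffEDist_ne_top_of_mem_dist (H1 : ∀ x ∈ s, ∃ y ∈ t, dist x y ≤ r)
    (H2 : ∀ x ∈ t, ∃ y ∈ s, dist x y ≤ r) : hausdorffEDist s t ≠ ⊤ := by
  refine ne_top_of_le_ne_top (ENNReal.ofReal_ne_top (r := r))
    (hausdorffEDist_le_of_mem_edist ?_ ?_)
  · intro x hx
    obtain ⟨y, hy, hxy⟩ := H1 x hx
    exact ⟨y, hy, edist_dist x y ▸ ENNReal.ofReal_le_ofReal hxy⟩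
  · intro x hx
    obtain ⟨y, hy, hxy⟩ := H2 x hx
    exact ⟨y, hy, edist_dist x y ▸ ENNReal.ofReal_le_ofReal hxy⟩

theorem le_hausdorffDist_of_forall_le_dist {x : α} (hx : x ∈ s) (fin : hausdorffEDist s t ≠ ⊤)
    (h : ∀ y ∈ t, r ≤ dist x y) : r ≤ hausdorffDist s t :=
  ((le_infDist (nonempty_of_hausdorffEDist_ne_top ⟨x, hx⟩ fin)).2 h).trans
    (infDist_le_hausdorffDist_of_mem hx fin)

end Metric

section Hausdorff

variable {E : Type*} [NormedAddCommGroup E] [InnerProductSpace ℝ E] [FiniteDimensional ℝ E]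
  {C P : Set E} {a b : E → ℝ}

theorem bddAbove_image_abs_sub_normalize (hC : IsOpen C)
    (hCsmul : ∀ p ∈ C, ∀ l : ℝ, 0 < l → l • p ∈ C) (ha : ConvexOn ℝ C a) (hb : ConvexOn ℝ C b)
    (hPcomp : IsCompact P) (hPC : P ⊆ C) (hP0 : (0 : E) ∉ P) :
    BddAbove ((fun p => |a (‖p‖⁻¹ • p) - b (‖p‖⁻¹ • p)|) '' P) := by
  have hnorm : ∀ p ∈ P, ‖p‖ ≠ 0 := fun p hp =>
    norm_ne_zero_iff.2 (ne_of_mem_of_not_mem hp hP0)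
  have hmaps : MapsTo (fun p : E => ‖p‖⁻¹ • p) P C := fun p hp =>
    hCsmul p (hPC hp) _ (inv_pos.2 ((norm_nonneg p).lt_of_ne' (hnorm p hp)))
  have hcont : ContinuousOn (fun p : E => ‖p‖⁻¹ • p) P :=
    (continuous_norm.continuousOn.inv₀ hnorm).smul continuousOn_id
  exact hPcomp.bddAbove_image ((((ha.continuousOn hC).comp hcont hmaps).sub
    ((hb.continuousOn hC).comp hcont hmaps)).abs)

theorem hausdorffDist_halfspaceInter (hC : IsOpen C)
    (hCsmul : ∀ p ∈ C, ∀ l : ℝ, 0 < l → l • p ∈ C) (ha : ConvexOn ℝ C a) (hb : ConvexOn ℝ C b)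
    (hahom : ∀ p ∈ C, ∀ l : ℝ, 0 < l → a (l • p) = l * a p)
    (hbhom : ∀ p ∈ C, ∀ l : ℝ, 0 < l → b (l • p) = l * b p)
    (hPne : P.Nonempty) (hPconv : Convex ℝ P) (hPcomp : IsCompact P) (hPC : P ⊆ C)
    (hP0 : (0 : E) ∉ P) :
    hausdorffDist (halfspaceInter P a) (halfspaceInter P b) =
      sSup ((fun p => |a (‖p‖⁻¹ • p) - b (‖p‖⁻¹ • p)|) '' P) := by
  set M := sSup ((fun p => |a (‖p‖⁻¹ • p) - b (‖p‖⁻¹ • p)|) '' P)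
  have hle : ∀ p ∈ P, |a (‖p‖⁻¹ • p) - b (‖p‖⁻¹ • p)| ≤ M := fun p hp =>
    le_csSup (bddAbove_image_abs_sub_normalize hC hCsmul ha hb hPcomp hPC hP0) ⟨p, hp, rfl⟩
  have hM0 : 0 ≤ M := (abs_nonneg _).trans (hle _ hPne.some_mem)
  have hAB := fun y (hy : y ∈ halfspaceInter P a) =>
    exists_dist_le_of_mem_halfspaceInter hC hCsmul hb hahom hbhom hPne hPconv hPcomp hPC hP0
      hM0 (fun p hp => (le_abs_self _).trans (hle p hp)) hy
  have hBA := fun y (hy : y ∈ halfspaceInter P b) =>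
    exists_dist_le_of_mem_halfspaceInter hC hCsmul ha hbhom hahom hPne hPconv hPcomp hPC hP0
      hM0 (fun p hp => (le_abs_self _).trans ((abs_sub_comm _ _).trans_le (hle p hp))) hy
  have hfin := hausdorffEDist_ne_top_of_mem_dist hAB hBA
  refine le_antisymm (hausdorffDist_le_of_mem_dist hM0 hAB hBA)
    (Real.sSup_le ?_ hausdorffDist_nonneg)
  rintro _ ⟨p, hp, rfl⟩
  refine abs_sub_le_iff.2 ⟨?_, ?_⟩
  · obtain ⟨y, hy, hdist⟩ :=
      exists_mem_halfspaceInter_sub_le_dist hC hCsmul ha hahom hbhom hPC hP0 hp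
    exact le_hausdorffDist_of_forall_le_dist hy hfin hdist
  · obtain ⟨y, hy, hdist⟩ :=
      exists_mem_halfspaceInter_sub_le_dist hC hCsmul hb hbhom hahom hPC hP0 hp
    rw [hausdorffDist_comm]
    exact le_hausdorffDist_of_forall_le_dist hy (hausdorffEDist_comm.trans_ne hfin) hdist

end Hausdorff

theorem isOpen_posOrthant (d : ℕ) : IsOpen (posOrthant d) := by
  rw [show posOrthant d = ⋂ i, (fun p : EuclideanSpace ℝ (Fin d) => p i) ⁻¹' Ioi 0 by
    ext; simp [posOrthant]]
  exact isOpen_iInter_of_finite fun i =>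
    isOpen_Ioi.preimage (EuclideanSpace.proj i).continuous

theorem smul_mem_posOrthant {d : ℕ} {p : EuclideanSpace ℝ (Fin d)} (hp : p ∈ posOrthant d)
    {l : ℝ} (hl : 0 < l) : l • p ∈ posOrthant d :=
  fun i => mul_pos hl (hp i)

theorem zero_notMem_posOrthant {d : ℕ} (hd : 0 < d) : 0 ∉ posOrthant d :=
  fun h => (h ⟨0, hd⟩).false

/-- Lemma A.2 (truncation lemma): the Hausdorff distance between two half-space
intersections induced by convex, positively homogeneous degree-1 functions over a
nonempty convex compact set of strictly positive prices equals the sup-distance of the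
functions along normalized prices. -/
theorem stmt5 (d : ℕ) (hd : 2 ≤ d)
    (a b : EuclideanSpace ℝ (Fin d) → ℝ)
    (haconv : ConvexOn ℝ (posOrthant d) a)
    (hbconv : ConvexOn ℝ (posOrthant d) b)
    (hahom : ∀ p ∈ posOrthant d, ∀ l : ℝ, 0 < l → a (l • p) = l * a p)
    (hbhom : ∀ p ∈ posOrthant d, ∀ l : ℝ, 0 < l → b (l • p) = l * b p)
    (Pb : Set (EuclideanSpace ℝ (Fin d))) (hPbne : Pb.Nonempty)
    (hPbconv : Convex ℝ Pb) (hPbcomp : IsCompact Pb) (hPbpos : Pb ⊆ posOrthant d) :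
    Metric.hausdorffDist
        {y : EuclideanSpace ℝ (Fin d) | ∀ p ∈ Pb, ⟪p, y⟫ ≤ a p}
        {y : EuclideanSpace ℝ (Fin d) | ∀ p ∈ Pb, ⟪p, y⟫ ≤ b p}
      = sSup ((fun p => |a (‖p‖⁻¹ • p) - b (‖p‖⁻¹ • p)|) '' Pb) :=
  hausdorffDist_halfspaceInter (isOpen_posOrthant d)
    (fun _ hp _ hl => smul_mem_posOrthant hp hl) haconv hbconv hahom hbhom hPbne hPbconv
    hPbcomp hPbpos fun h => zero_notMem_posOrthant (by omega) (hPbpos h)
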